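/- Let G and H be finite connected simple graphs. If μt(G) = |S(G)| or μt(H) = |S(H)|, where S(Γ) denotes the set of simplicial vertices of a graph Γ, then μt(G □ H) ≤ μt(G)·μt(H). -/

import Mathlib

open SimpleGraph

/-- `X` is a total mutual-visibility set of `G`: every two vertices of `G` are `X`-visible,
i.e. joined by a shortest path whose internal vertices avoid `X`. -/
def IsTMVSet {V : Type*} (G : SimpleGraph V) (X : Set V) : Prop :=
  ∀ x y : V, ∃ p : G.Walk x y, p.length = G.dist x y ∧
    ∀ w ∈ p.support, w ≠ x → w ≠ y → w ∉ X

/-- The total mutual-visibility number of `G`. -/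
noncomputable def muT {V : Type*} (G : SimpleGraph V) : ℕ :=
  sSup {n : ℕ | ∃ X : Set V, IsTMVSet G X ∧ X.ncard = n}

/-- `D` is a dominating set of `G`. -/
def IsDomSet {V : Type*} (G : SimpleGraph V) (D : Set V) : Prop :=
  ∀ v : V, v ∉ D → ∃ u ∈ D, G.Adj u v

/-- The domination number of `G`. -/
noncomputable def gammaDom {V : Type*} (G : SimpleGraph V) : ℕ :=
  sInf {n : ℕ | ∃ D : Set V, IsDomSet G D ∧ D.ncard = n}

/-- `D` is a connected dominating set of `G`. -/
def IsConnDomSet {V : Type*} (G : SimpleGraph V) (D : Set V) : Prop :=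
  IsDomSet G D ∧ (G.induce D).Connected

/-- The connected domination number of `G`. -/
noncomputable def gammaConnDom {V : Type*} (G : SimpleGraph V) : ℕ :=
  sInf {n : ℕ | ∃ D : Set V, IsConnDomSet G D ∧ D.ncard = n}

/-- The closed neighborhood of a vertex. -/
def closedNbhd {V : Type*} (G : SimpleGraph V) (v : V) : Set V :=
  insert v (G.neighborSet v)

/-- The set of simplicial vertices of `G`. -/
def simpSet {V : Type*} (G : SimpleGraph V) : Set V :=
  {v | G.IsClique (G.neighborSet v)}

/-- The set `P(G)` of vertices that appear as the unique common closed neighbor of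
two vertices. -/
def pSet {V : Type*} (G : SimpleGraph V) : Set V :=
  {v | ∃ u w : V, closedNbhd G u ∩ closedNbhd G w = {v}}

/-- The set `C(G)` of vertices belonging to every maximum total mutual-visibility set. -/
def compulsorySet {V : Type*} (G : SimpleGraph V) : Set V :=
  {v | ∀ X : Set V, IsTMVSet G X → X.ncard = muT G → v ∈ X}

/-- The set `F(G)` of vertices belonging to no maximum total mutual-visibility set. -/
def forbiddenSet {V : Type*} (G : SimpleGraph V) : Set V :=
  {v | ∀ X : Set V, IsTMVSet G X → X.ncard = muT G → v ∉ X}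

/-- The independent total mutual-visibility number of `G`. -/
noncomputable def muIT {V : Type*} (G : SimpleGraph V) : ℕ :=
  sSup {n : ℕ | ∃ X : Set V, IsTMVSet G X ∧ (∀ u ∈ X, ∀ v ∈ X, ¬ G.Adj u v) ∧ X.ncard = n}

/-- The join `G + H` of two graphs. -/
def joinGraph {V W : Type*} (G : SimpleGraph V) (H : SimpleGraph W) :
    SimpleGraph (V ⊕ W) :=
  SimpleGraph.fromRel (fun x y =>
    (∃ a b, x = Sum.inl a ∧ y = Sum.inl b ∧ G.Adj a b) ∨
    (∃ a b, x = Sum.inr a ∧ y = Sum.inr b ∧ H.Adj a b) ∨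
    (∃ a b, x = Sum.inl a ∧ y = Sum.inr b))

/-- The corona product `G ⊙ H`: a copy of `G` together with a copy `Hᵢ` of `H` for each
vertex `uᵢ` of `G`, where `uᵢ` is joined to all vertices of `Hᵢ`. -/
def coronaProd {V W : Type*} (G : SimpleGraph V) (H : SimpleGraph W) :
    SimpleGraph (V ⊕ V × W) :=
  SimpleGraph.fromRel (fun x y =>
    (∃ a b, x = Sum.inl a ∧ y = Sum.inl b ∧ G.Adj a b) ∨
    (∃ i w w', x = Sum.inr (i, w) ∧ y = Sum.inr (i, w') ∧ H.Adj w w') ∨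
    (∃ i w, x = Sum.inl i ∧ y = Sum.inr (i, w)))

/-- The lexicographic product `G ∘ H`. -/
def lexProd {V W : Type*} (G : SimpleGraph V) (H : SimpleGraph W) :
    SimpleGraph (V × W) where
  Adj x y := G.Adj x.1 y.1 ∨ (x.1 = y.1 ∧ H.Adj x.2 y.2)
  symm := ⟨fun x y h => by
    rcases h with h | ⟨h1, h2⟩
    · exact Or.inl h.symm
    · exact Or.inr ⟨h1.symm, h2.symm⟩⟩
  loopless := ⟨fun x h => by
    rcases h with h | ⟨_, h⟩
    · exact G.loopless.irrefl _ h
    · exact H.loopless.irrefl _ h⟩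

/-- `B` induces a 2-connected subgraph of `G`. -/
def IsTwoConnSet {V : Type*} (G : SimpleGraph V) (B : Set V) : Prop :=
  3 ≤ B.ncard ∧ (G.induce B).Connected ∧ ∀ v ∈ B, (G.induce (B \ {v})).Connected

/-!
A simplicial vertex is never an inner vertex of a geodesic, so adding `S(G)` to a total
mutual-visibility set keeps it one. Hence, when `μt(G) = |S(G)|`, every total mutual-visibility
set of `G` lies inside `S(G)`. A geodesic of `G □ H` between two vertices of one `G`-layer stays
in that layer, so each `G`-layer of a total mutual-visibility set `X` of `G □ H` is a total
mutual-visibility set of `G`, and likewise for `H`-layers. Thus `X` meets only the `|S(G)|`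
`H`-layers over `S(G)`, each in at most `μt(H)` vertices.
-/

open Walk

section

variable {V V' W : Type*} {G : SimpleGraph V} {G' : SimpleGraph V'} {H : SimpleGraph W}

namespace SimpleGraph

lemma Walk.notMem_simpSet_of_length_eq_dist {x y w : V} {p : G.Walk x y}
    (hp : p.length = G.dist x y) (hw : w ∈ p.support) (hwx : w ≠ x) (hwy : w ≠ y) :
    w ∉ simpSet G := by
  intro hS
  obtain ⟨q, r, rfl⟩ := mem_support_iff_exists_append.mp hw
  have hq : ¬ q.Nil := fun h => hwx h.eq.symm
  have hr : ¬ r.Nil := fun h => hwy h.eq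
  have hshortcut : G.dist x y ≤ q.dropLast.length + 1 + r.tail.length := by
    by_cases huv : q.penultimate = r.snd
    · have := dist_le ((q.dropLast.copy rfl huv).append r.tail)
      simp only [length_append, length_copy] at this
      omega
    · have hadj : G.Adj q.penultimate r.snd :=
        hS (G.mem_neighborSet _ _ |>.mpr (adj_penultimate hq).symm)
          (G.mem_neighborSet _ _ |>.mpr (adj_snd hr)) huv
      have := dist_le (q.dropLast.append (cons hadj r.tail))
      simp only [length_append, length_cons] at this
      omega
  have := length_dropLast_add_one hq
  have := length_tail_add_one hr
  simp only [length_append] at hp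
  omega

lemma Hom.edist_map_le (f : G →g G') (u v : V) : G'.edist (f u) (f v) ≤ G.edist u v := by
  by_cases huv : G.Reachable u v
  · obtain ⟨p, hp⟩ := huv.exists_walk_length_eq_edist
    rw [← hp, ← length_map f p]
    exact edist_le _
  · rw [edist_eq_top_of_not_reachable huv]
    exact le_top

lemma Iso.dist_map (e : G ≃g G') (u v : V) : G'.dist (e u) (e v) = G.dist u v := by
  have hle := Hom.edist_map_le e.symm.toHom (e u) (e v)
  simp only [RelHom.coeFn_mk, RelIso.coe_fn_toEquiv, RelIso.symm_apply_apply] at hle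
  exact congrArg ENat.toNat (le_antisymm (Hom.edist_map_le e.toHom u v) hle)

lemma Walk.exists_walk_fst_of_boxProd {x y : V × W} (p : (G □ H).Walk x y) :
    ∃ q : G.Walk x.1 y.1, q.length ≤ p.length ∧
      (q.length = p.length → ∀ a ∈ q.support, (a, x.2) ∈ p.support) := by
  induction p with
  | nil => exact ⟨nil, le_rfl, fun _ a ha => by simp_all⟩
  | @cons x z y hxz p ih =>
    obtain ⟨q, hqp, hq⟩ := ih
    rcases boxProd_adj.mp hxz with ⟨hG, h2⟩ | ⟨-, h1⟩
    · refine ⟨cons hG q, by simpa using hqp, fun hlen a ha => ?_⟩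
      simp only [length_cons, Nat.add_right_cancel_iff] at hlen
      rw [support_cons, List.mem_cons] at ha
      rcases ha with rfl | ha
      · exact start_mem_support _
      · exact List.mem_cons_of_mem _ (h2 ▸ hq hlen a ha)
    · refine ⟨q.copy h1.symm rfl, by simp only [length_copy, length_cons]; omega, ?_⟩
      simp only [length_copy, length_cons]
      omega

lemma dist_boxProd_mk_same_snd (a a' : V) (b : W) : (G □ H).dist (a, b) (a', b) = G.dist a a' := by
  simp [SimpleGraph.dist, edist_boxProd]

end SimpleGraph

lemma IsTMVSet.union_simpSet {X : Set V} (hX : IsTMVSet G X) : IsTMVSet G (X ∪ simpSet G) := by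
  intro x y
  obtain ⟨p, hp, hpX⟩ := hX x y
  refine ⟨p, hp, fun w hw hwx hwy hwXS => ?_⟩
  rcases hwXS with hwX | hwS
  · exact hpX w hw hwx hwy hwX
  · exact Walk.notMem_simpSet_of_length_eq_dist hp hw hwx hwy hwS

lemma ncard_le_muT [Finite V] {X : Set V} (hX : IsTMVSet G X) : X.ncard ≤ muT G :=
  le_csSup ⟨Nat.card V, by rintro _ ⟨Y, -, rfl⟩; exact Y.ncard_le_card⟩ ⟨X, hX, rfl⟩

lemma subset_simpSet_of_muT_eq [Finite V] (h : muT G = (simpSet G).ncard) {X : Set V}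
    (hX : IsTMVSet G X) : X ⊆ simpSet G := by
  have hle : (X ∪ simpSet G).ncard ≤ (simpSet G).ncard := h ▸ ncard_le_muT hX.union_simpSet
  have heq := Set.eq_of_subset_of_ncard_le Set.subset_union_right hle (Set.toFinite _)
  exact heq ▸ Set.subset_union_left

lemma IsTMVSet.preimage_iso (e : G ≃g G') {X : Set V'} (hX : IsTMVSet G' X) :
    IsTMVSet G (e ⁻¹' X) := by
  intro x y
  obtain ⟨p, hp, hpX⟩ := hX (e x) (e y)
  refine ⟨(p.map e.symm.toHom).copy (e.symm_apply_apply x) (e.symm_apply_apply y), ?_, ?_⟩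
  · rw [length_copy, length_map, hp, Iso.dist_map e]
  · intro w hw hwx hwy hwX
    rw [support_copy, Walk.support_map, List.mem_map] at hw
    obtain ⟨w', hw', rfl⟩ := hw
    simp only [RelHom.coeFn_mk, RelIso.coe_fn_toEquiv, Set.mem_preimage,
      RelIso.apply_symm_apply] at hwX
    exact hpX w' hw' (fun h => hwx (by simp [h])) (fun h => hwy (by simp [h])) hwX

namespace SimpleGraph

lemma Iso.muT_le (e : G ≃g G') [Finite V] : muT G' ≤ muT G := by
  refine csSup_le' ?_
  rintro _ ⟨X, hX, rfl⟩
  rw [← Set.ncard_preimage_of_injective_subset_range e.injective (by simp [e.surjective.range_eq])]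
  exact ncard_le_muT (hX.preimage_iso e)

lemma Iso.muT_eq (e : G ≃g G') [Finite V] [Finite V'] : muT G = muT G' :=
  le_antisymm (Iso.muT_le e.symm) (Iso.muT_le e)

end SimpleGraph

lemma IsTMVSet.boxProd_layer_left {X : Set (V × W)} (hX : IsTMVSet (G □ H) X) (b : W) :
    IsTMVSet G {a | (a, b) ∈ X} := by
  intro a a'
  obtain ⟨p, hp, hpX⟩ := hX (a, b) (a', b)
  obtain ⟨q, hqp, hq⟩ := p.exists_walk_fst_of_boxProd
  have hlen : q.length = p.length := by
    have : G.dist a a' ≤ q.length := dist_le q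
    rw [hp, dist_boxProd_mk_same_snd] at hqp ⊢
    omega
  refine ⟨q, by rw [hlen, hp, dist_boxProd_mk_same_snd], fun c hc hca hca' => ?_⟩
  exact hpX (c, b) (hq hlen c hc) (by simp [hca]) (by simp [hca'])

lemma IsTMVSet.boxProd_layer_right {X : Set (V × W)} (hX : IsTMVSet (G □ H) X) (a : V) :
    IsTMVSet H {b | (a, b) ∈ X} :=
  (hX.preimage_iso (H.boxProdComm G)).boxProd_layer_left a

lemma Set.ncard_le_ncard_mul_of_fst_mem {α β : Type*} [Finite α] [Finite β] {X : Set (α × β)}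
    {T : Set α} {m : ℕ} (hT : ∀ x ∈ X, x.1 ∈ T) (hm : ∀ a ∈ T, {b | (a, b) ∈ X}.ncard ≤ m) :
    X.ncard ≤ T.ncard * m := by
  classical
  obtain ⟨s, rfl⟩ := (Set.toFinite X).exists_finset_coe
  obtain ⟨t, rfl⟩ := (Set.toFinite T).exists_finset_coe
  have hfiber (a : α) : (s.filter fun x => x.1 = a).card = {b | (a, b) ∈ s}.ncard := by
    rw [← Set.ncard_coe_finset,
      ← Set.ncard_image_of_injective {b | (a, b) ∈ s} (Prod.mk_right_injective a)]
    congr 1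
    ext ⟨a', b⟩
    aesop
  simp only [Set.ncard_coe_finset, Finset.mem_coe] at hT hm ⊢
  rw [mul_comm]
  exact Finset.card_le_mul_card_image_of_maps_to hT m fun a ha => hfiber a ▸ hm a ha

lemma muT_boxProd_le_of_muT_eq_ncard_simpSet [Finite V] [Finite W]
    (h : muT G = (simpSet G).ncard) : muT (G □ H) ≤ muT G * muT H := by
  refine csSup_le' ?_
  rintro _ ⟨X, hX, rfl⟩
  rw [h]
  exact Set.ncard_le_ncard_mul_of_fst_mem
    (fun x hx => subset_simpSet_of_muT_eq h (hX.boxProd_layer_left x.2) hx)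
    (fun a _ => ncard_le_muT (hX.boxProd_layer_right a))

end

theorem muT_boxProd_le_mul_general {V W : Type*} [Fintype V] [Fintype W]
    (G : SimpleGraph V) (H : SimpleGraph W)
    (h : muT G = (simpSet G).ncard ∨ muT H = (simpSet H).ncard) :
    muT (G □ H) ≤ muT G * muT H := by
  rcases h with hG | hH
  · exact muT_boxProd_le_of_muT_eq_ncard_simpSet hG
  · calc muT (G □ H) = muT (H □ G) := Iso.muT_eq (G.boxProdComm H)
      _ ≤ muT H * muT G := muT_boxProd_le_of_muT_eq_ncard_simpSet hH
      _ = muT G * muT H := mul_comm _ _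

/-- If `μt(G) = |S(G)|` or `μt(H) = |S(H)|`, then
`μt(G □ H) ≤ μt(G) μt(H)`. -/
theorem muT_boxProd_le_mul {V W : Type*} [Fintype V] [Fintype W]
    (G : SimpleGraph V) (H : SimpleGraph W) (hG : G.Connected) (hH : H.Connected)
    (h : muT G = (simpSet G).ncard ∨ muT H = (simpSet H).ncard) :
    muT (G □ H) ≤ muT G * muT H :=
  muT_boxProd_le_mul_general G H h
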